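/- arXiv:1510.09000 — 2 statements merged into one kernel-verified Lean document; each statement's English description precedes it below -/
import Mathlib

section
/- Let {Y_i}_{i=0}^∞ be a sequence of non-negative real numbers satisfying Y_{i+1} ≤ Σ_{k=1}^m A_k B^i Y_i^{1+μ_k} for all i = 0,1,2,…, where m ≥ 1 is an integer, B > 1, and A_k > 0, μ_k > 0 for k = 1,…,m. Let μ = min{μ_k : 1 ≤ k ≤ m}. If Y₀ ≤ min{ (m^{−1} A_k^{−1} B^{−1/μ})^{1/μ_k} : 1 ≤ k ≤ m }, then lim_{i→∞} Y_i = 0. -/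
/-!
With `c = B ^ (-1/μ) < 1`, induction shows `Y i ≤ Y 0 * c ^ i`: inserting this bound into the
recursion, the `k`-th term is at most `A k * Y 0 ^ μ k * (B * c ^ μ k) ^ i * Y 0 * c ^ i`, where
`B * c ^ μ k = B ^ (1 - μ k / μ) ≤ 1` because `μ ≤ μ k`, and the smallness of `Y 0` makes
`∑ k, A k * Y 0 ^ μ k ≤ c`.
-/

open Filter Finset Real

theorem mul_rpow_neg_inv_rpow_le_one {B μ ν : ℝ} (hB : 1 ≤ B) (hμ : 0 < μ) (hμν : μ ≤ ν) :
    B * (B ^ (-(1 / μ))) ^ ν ≤ 1 := by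
  have hB₀ : 0 < B := zero_lt_one.trans_le hB
  calc B * (B ^ (-(1 / μ))) ^ ν = B ^ (1 - ν / μ) := by
        rw [← rpow_mul hB₀.le, sub_eq_add_neg, rpow_add hB₀, rpow_one]
        ring_nf
    _ ≤ 1 := rpow_le_one_of_one_le_of_nonpos hB <| by
        rw [sub_nonpos, one_le_div hμ]; exact hμν

theorem mul_pow_mul_rpow_one_add_le {a B c ν Y₀ y : ℝ} {i : ℕ} (ha : 0 ≤ a) (hB : 0 ≤ B)
    (hc : 0 ≤ c) (hν : 0 ≤ ν) (hY₀ : 0 ≤ Y₀) (hy : 0 ≤ y) (hyi : y ≤ Y₀ * c ^ i)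
    (hBc : B * c ^ ν ≤ 1) :
    a * B ^ i * y ^ (1 + ν) ≤ a * Y₀ ^ ν * (Y₀ * c ^ i) := by
  have hX : 0 ≤ Y₀ * c ^ i := by positivity
  calc a * B ^ i * y ^ (1 + ν) ≤ a * B ^ i * (Y₀ * c ^ i) ^ (1 + ν) := by gcongr
    _ = a * Y₀ ^ ν * (B * c ^ ν) ^ i * (Y₀ * c ^ i) := by
        rw [rpow_one_add' hX (by positivity), mul_rpow hY₀ (by positivity),
          ← rpow_pow_comm hc, mul_pow]
        ring
    _ ≤ a * Y₀ ^ ν * 1 * (Y₀ * c ^ i) := by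
        gcongr
        exact pow_le_one₀ (by positivity) hBc
    _ = a * Y₀ ^ ν * (Y₀ * c ^ i) := by ring

theorem le_mul_pow_of_le_sum_rpow {ι : Type*} [Fintype ι] {Y : ℕ → ℝ} {a ν : ι → ℝ} {B c : ℝ}
    (hY : ∀ i, 0 ≤ Y i) (ha : ∀ k, 0 ≤ a k) (hν : ∀ k, 0 ≤ ν k) (hB : 0 ≤ B) (hc : 0 ≤ c)
    (hBc : ∀ k, B * c ^ ν k ≤ 1) (hY₀ : ∑ k, a k * Y 0 ^ ν k ≤ c)
    (hrec : ∀ i, Y (i + 1) ≤ ∑ k, a k * B ^ i * Y i ^ (1 + ν k)) (i : ℕ) :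
    Y i ≤ Y 0 * c ^ i := by
  induction i with
  | zero => simp
  | succ i ih =>
    calc Y (i + 1) ≤ ∑ k, a k * B ^ i * Y i ^ (1 + ν k) := hrec i
      _ ≤ ∑ k, a k * Y 0 ^ ν k * (Y 0 * c ^ i) := sum_le_sum fun k _ ↦
          mul_pow_mul_rpow_one_add_le (ha k) hB hc (hν k) (hY 0) (hY i) ih (hBc k)
      _ = (∑ k, a k * Y 0 ^ ν k) * (Y 0 * c ^ i) := (sum_mul ..).symm
      _ ≤ c * (Y 0 * c ^ i) := by gcongr; exact mul_nonneg (hY 0) (pow_nonneg hc i)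
      _ = Y 0 * c ^ (i + 1) := by ring

theorem tendsto_zero_of_le_sum_rpow {ι : Type*} [Fintype ι] {Y : ℕ → ℝ} {a ν : ι → ℝ}
    {B c : ℝ} (hY : ∀ i, 0 ≤ Y i) (ha : ∀ k, 0 ≤ a k) (hν : ∀ k, 0 ≤ ν k) (hB : 0 ≤ B)
    (hc : 0 ≤ c) (hc₁ : c < 1) (hBc : ∀ k, B * c ^ ν k ≤ 1) (hY₀ : ∑ k, a k * Y 0 ^ ν k ≤ c)
    (hrec : ∀ i, Y (i + 1) ≤ ∑ k, a k * B ^ i * Y i ^ (1 + ν k)) :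
    Tendsto Y atTop (nhds 0) := by
  refine squeeze_zero hY (le_mul_pow_of_le_sum_rpow hY ha hν hB hc hBc hY₀ hrec) ?_
  simpa using (tendsto_pow_atTop_nhds_zero_of_lt_one hc hc₁).const_mul (Y 0)

theorem fast_geometric_convergence_general
    (m : ℕ)
    (Y : ℕ → ℝ) (hY : ∀ i, 0 ≤ Y i)
    (B : ℝ) (hB : 1 < B)
    (A μ : Fin m → ℝ) (hA : ∀ k, 0 < A k) (hμ : ∀ k, 0 < μ k)
    (hrec : ∀ i : ℕ, Y (i + 1) ≤ ∑ k : Fin m, A k * B ^ i * Y i ^ (1 + μ k))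
    (μmin : ℝ) (hμmin : IsLeast {x : ℝ | ∃ k : Fin m, x = μ k} μmin)
    (hY0 : ∀ k : Fin m,
      Y 0 ≤ ((m : ℝ)⁻¹ * (A k)⁻¹ * B ^ (-(1 / μmin))) ^ (1 / μ k)) :
    Tendsto Y atTop (nhds 0) := by
  obtain ⟨k₀, rfl⟩ := hμmin.1
  set c := B ^ (-(1 / μ k₀))
  have hB₀ : 0 < B := zero_lt_one.trans hB
  have hc₁ : c < 1 := rpow_lt_one_of_one_lt_of_neg hB (by simpa using hμ k₀)
  have hm : (m : ℝ) ≠ 0 := Nat.cast_ne_zero.2 k₀.pos.ne'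
  have hsmall : ∀ k, A k * Y 0 ^ μ k ≤ c / m := fun k ↦ by
    have := rpow_le_rpow (hY 0) (hY0 k) (hμ k).le
    rw [one_div, rpow_inv_rpow (by have := hA k; positivity) (hμ k).ne'] at this
    calc A k * Y 0 ^ μ k ≤ A k * ((m : ℝ)⁻¹ * (A k)⁻¹ * c) := by gcongr; exact (hA k).le
      _ = c / m := by field_simp [(hA k).ne']
  refine tendsto_zero_of_le_sum_rpow hY (fun k ↦ (hA k).le) (fun k ↦ (hμ k).le) hB₀.le
    (by positivity) hc₁ (fun k ↦ mul_rpow_neg_inv_rpow_le_one hB.le (hμ k₀) (hμmin.2 ⟨k, rfl⟩))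
    ?_ hrec
  calc ∑ k, A k * Y 0 ^ μ k ≤ ∑ _k : Fin m, c / m := sum_le_sum fun k _ ↦ hsmall k
    _ = c := by simp [field]

/-- Fast-geometric-convergence lemma for De Giorgi iteration with several
nonlinear terms (Lemma 2.6). -/
theorem fast_geometric_convergence
    (m : ℕ) (hm : 1 ≤ m)
    (Y : ℕ → ℝ) (hY : ∀ i, 0 ≤ Y i)
    (B : ℝ) (hB : 1 < B)
    (A μ : Fin m → ℝ) (hA : ∀ k, 0 < A k) (hμ : ∀ k, 0 < μ k)
    (hrec : ∀ i : ℕ, Y (i + 1) ≤ ∑ k : Fin m, A k * B ^ i * Y i ^ (1 + μ k))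
    (μmin : ℝ) (hμmin : IsLeast {x : ℝ | ∃ k : Fin m, x = μ k} μmin)
    (hY0 : ∀ k : Fin m,
      Y 0 ≤ ((m : ℝ)⁻¹ * (A k)⁻¹ * B ^ (-(1 / μmin))) ^ (1 / μ k)) :
    Tendsto Y atTop (nhds 0) :=
  fast_geometric_convergence_general m Y hY B hB A μ hA hμ hrec μmin hμmin hY0
end

section
/- Let a ∈ (0,1) and let w, b > 0 satisfy w·b^{2−a} ≤ b/2. Then for all s, t ≥ 0, one has 2 w s² / ( (s+t)^a + b^a ) ≥ (1/2) w s^{2−a} − (1/4) b − 2 w t^{2−a}. -/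
/-! The right-hand side is nonnegative, so only `s > max t b` needs an argument: for `s ≤ t` the
term `2 w t^{2-a}` absorbs `(1/2) w s^{2-a}`, and for `s ≤ b` the hypothesis `w b^{2-a} ≤ b/2`
lets `b/4` absorb it. For `s > max t b` the denominator is at most `(2s)^a + s^a ≤ 3 s^a`, so
the right-hand side is at least `(2/3) w s^{2-a}`. -/

open Real

lemma rpow_add_add_rpow_le_three_mul_rpow {a s t b : ℝ} (ha0 : 0 ≤ a) (ha1 : a ≤ 1)
    (ht : 0 ≤ t) (hts : t ≤ s) (hb : 0 ≤ b) (hbs : b ≤ s) :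
    (s + t) ^ a + b ^ a ≤ 3 * s ^ a := by
  have hs : 0 ≤ s := ht.trans hts
  have h2 : (2 : ℝ) ^ a ≤ 2 := by simpa using rpow_le_rpow_of_exponent_le one_le_two ha1
  calc (s + t) ^ a + b ^ a ≤ (2 * s) ^ a + s ^ a := by gcongr; linarith
    _ = 2 ^ a * s ^ a + s ^ a := by rw [mul_rpow zero_le_two hs]
    _ ≤ 2 * s ^ a + s ^ a := by gcongr
    _ = 3 * s ^ a := by ring

lemma rpow_two_sub_div_le_sq_div {a c s D : ℝ} (hs : 0 < s) (hD : 0 < D)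
    (hDs : D ≤ c * s ^ a) : s ^ (2 - a) / c ≤ s ^ 2 / D := by
  rw [rpow_sub hs, rpow_two, div_div, mul_comm]
  exact div_le_div_of_nonneg_left (by positivity) hD hDs

/-- Pointwise inequality underlying the coercivity estimate in the De Giorgi iteration:
if `a ∈ (0,1)`, `w, b > 0` and `w·b^{2−a} ≤ b/2`, then for all `s, t ≥ 0`,
`2ws²/((s+t)^a + b^a) ≥ (1/2)w s^{2−a} − (1/4)b − 2w t^{2−a}`. -/
theorem de_giorgi_coercivity_pointwise
    (a w b s t : ℝ) (ha0 : 0 < a) (ha1 : a < 1) (hw : 0 < w) (hb : 0 < b)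
    (hwb : w * b ^ (2 - a) ≤ b / 2) (hs : 0 ≤ s) (ht : 0 ≤ t) :
    (1 / 2) * w * s ^ (2 - a) - (1 / 4) * b - 2 * w * t ^ (2 - a) ≤
      2 * w * s ^ 2 / ((s + t) ^ a + b ^ a) := by
  have hRHS : 0 ≤ 2 * w * s ^ 2 / ((s + t) ^ a + b ^ a) := by positivity
  have hwt : 0 ≤ w * t ^ (2 - a) := by positivity
  rcases le_or_gt s t with hst | hts
  · have : s ^ (2 - a) ≤ t ^ (2 - a) := by gcongr; linarith
    nlinarith
  rcases le_or_gt s b with hsb | hbs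
  · have : s ^ (2 - a) ≤ b ^ (2 - a) := by gcongr; linarith
    nlinarith
  have hD := rpow_add_add_rpow_le_three_mul_rpow ha0.le ha1.le ht hts.le hb.le hbs.le
  have hlower := rpow_two_sub_div_le_sq_div (hb.trans hbs) (by positivity) hD
  calc (1 / 2) * w * s ^ (2 - a) - (1 / 4) * b - 2 * w * t ^ (2 - a)
      ≤ 2 * w * (s ^ (2 - a) / 3) := by nlinarith [rpow_nonneg hs (2 - a)]
    _ ≤ 2 * w * s ^ 2 / ((s + t) ^ a + b ^ a) := by rw [mul_div_assoc]; gcongr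
end
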